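/- Let f : ℝⁿ → ℝⁿ be a quadratic vector field and suppose x, x' satisfy the Kahan equation (x' - x)/h = 2 f((x+x')/2) - (1/2) f(x) - (1/2) f(x'). If I + (h/2) f'(x') is invertible, then (x' - x)/h = (I + (h/2) f'(x'))⁻¹ f(x'). -/

import Mathlib

/-!
For `f y = Q y y + L y + c` the right-hand side of the Kahan equation is the polarized expression
`½ (Q x x' + Q x' x + L x + L x') + c`, and `f'(x') v = Q x' v + Q v x' + L v`. Writing
`x = x' - h v` with `v = (x' - x)/h`, the Kahan equation becomes exactly
`v + (h/2) f'(x') v = f x'`, which is then inverted.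
-/

section Algebra

variable {𝕜 E : Type*} [Field 𝕜] [CharZero 𝕜] [AddCommGroup E] [Module 𝕜 E]

theorem kahan_rhs_eq_of_quadratic (Q : E →ₗ[𝕜] E →ₗ[𝕜] E) (L : E →ₗ[𝕜] E) (c x x' : E) :
    let f := fun y => Q y y + L y + c
    (2 : 𝕜) • f ((1/2 : 𝕜) • (x + x')) - (1/2 : 𝕜) • f x - (1/2 : 𝕜) • f x' =
      (1/2 : 𝕜) • (Q x x' + Q x' x + L x + L x') + c := by
  simp only [map_add, map_smul, LinearMap.add_apply, LinearMap.smul_apply]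
  module

theorem kahan_step_add_half_derivative (Q : E →ₗ[𝕜] E →ₗ[𝕜] E) (L : E →ₗ[𝕜] E)
    {c x x' v : E} {h : 𝕜} (hv : h • v = x' - x)
    (hkahan : v = (1/2 : 𝕜) • (Q x x' + Q x' x + L x + L x') + c) :
    v + (h/2) • (Q x' v + Q v x' + L v) = Q x' x' + L x' + c := by
  calc v + (h/2) • (Q x' v + Q v x' + L v)
      = v + (1/2 : 𝕜) • (Q x' (h • v) + Q (h • v) x' + L (h • v)) := by
        simp only [map_smul, LinearMap.smul_apply]; module
    _ = Q x' x' + L x' + c := by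
        rw [hv]
        nth_rw 1 [hkahan]
        simp only [map_sub, LinearMap.sub_apply]
        module

end Algebra

theorem hasFDerivAt_quadratic {𝕜 E : Type*} [NontriviallyNormedField 𝕜] [CompleteSpace 𝕜]
    [NormedAddCommGroup E] [NormedSpace 𝕜 E] [FiniteDimensional 𝕜 E]
    (Q : E →ₗ[𝕜] E →ₗ[𝕜] E) (L : E →ₗ[𝕜] E) (c x : E) :
    HasFDerivAt (fun y => Q y y + L y + c)
      (LinearMap.toContinuousLinearMap (Q x + Q.flip x + L)) x := by
  let Qc : E →L[𝕜] E →L[𝕜] E :=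
    LinearMap.toContinuousLinearMap (LinearMap.toContinuousLinearMap.toLinearMap ∘ₗ Q)
  have hQc : HasFDerivAt (fun y => Qc y y) _ x :=
    Qc.hasFDerivAt_of_bilinear (hasFDerivAt_id x) (hasFDerivAt_id x)
  refine ((hQc.add (LinearMap.toContinuousLinearMap L).hasFDerivAt).add_const c).congr_fderiv ?_
  ext v
  simp [Qc, add_comm]

theorem kahan_adjoint_rosenbrock_form_general (n : ℕ) (f : (Fin n → ℝ) → (Fin n → ℝ))
    (Q : (Fin n → ℝ) →ₗ[ℝ] (Fin n → ℝ) →ₗ[ℝ] (Fin n → ℝ))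
    (L : (Fin n → ℝ) →ₗ[ℝ] (Fin n → ℝ)) (c : Fin n → ℝ)
    (hf : ∀ x, f x = Q x x + L x + c)
    (h : ℝ) (hh : h ≠ 0) (x x' : Fin n → ℝ)
    (hkahan : (1/h) • (x' - x) =
      (2 : ℝ) • f ((1/2 : ℝ) • (x + x')) - (1/2 : ℝ) • f x - (1/2 : ℝ) • f x')
    (hinv : IsUnit ((1 : (Fin n → ℝ) →L[ℝ] (Fin n → ℝ)) + (h/2) • fderiv ℝ f x')) :
    (1/h) • (x' - x) =
      (Ring.inverse ((1 : (Fin n → ℝ) →L[ℝ] (Fin n → ℝ)) + (h/2) • fderiv ℝ f x'))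
        (f x') := by
  obtain rfl : f = fun y => Q y y + L y + c := funext hf
  set B := (1 : (Fin n → ℝ) →L[ℝ] (Fin n → ℝ)) + (h/2) • fderiv ℝ _ x'
  set v := (1/h) • (x' - x)
  have hv : h • v = x' - x := by simp [v, smul_smul, hh]
  have hBv : B v = Q x' x' + L x' + c := by
    simp only [B, (hasFDerivAt_quadratic Q L c x').fderiv]
    simpa using kahan_step_add_half_derivative Q L hv
      (hkahan.trans (kahan_rhs_eq_of_quadratic Q L c x x'))
  change v = Ring.inverse B (Q x' x' + L x' + c)
  rw [← hBv, ← mul_apply_eq_comp, Ring.inverse_mul_cancel B hinv, one_apply_eq_self]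

/-- If `x, x'` satisfy the Kahan equation for a quadratic vector field `f`
and `I + (h/2) f'(x')` is invertible, then `(x'-x)/h = (I + (h/2) f'(x'))⁻¹ f(x')`. -/
theorem kahan_adjoint_rosenbrock_form (n : ℕ) (f : (Fin n → ℝ) → (Fin n → ℝ))
    (Q : (Fin n → ℝ) →ₗ[ℝ] (Fin n → ℝ) →ₗ[ℝ] (Fin n → ℝ))
    (L : (Fin n → ℝ) →ₗ[ℝ] (Fin n → ℝ)) (c : Fin n → ℝ)
    (hQ : ∀ x y, Q x y = Q y x)
    (hf : ∀ x, f x = Q x x + L x + c)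
    (h : ℝ) (hh : h ≠ 0) (x x' : Fin n → ℝ)
    (hkahan : (1/h) • (x' - x) =
      (2 : ℝ) • f ((1/2 : ℝ) • (x + x')) - (1/2 : ℝ) • f x - (1/2 : ℝ) • f x')
    (hinv : IsUnit ((1 : (Fin n → ℝ) →L[ℝ] (Fin n → ℝ)) + (h/2) • fderiv ℝ f x')) :
    (1/h) • (x' - x) =
      (Ring.inverse ((1 : (Fin n → ℝ) →L[ℝ] (Fin n → ℝ)) + (h/2) • fderiv ℝ f x'))
        (f x') :=
  kahan_adjoint_rosenbrock_form_general n f Q L c hf h hh x x' hkahan hinv
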